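/- arXiv:1911.11345 — 3 statements merged into one kernel-verified Lean document; each statement's English description precedes it below -/
import Mathlib

section
/- Let Y, X, T be as in the missing-data setup with ignorability and positivity, and let φ(x,θ) := E[L(Y,X,θ) | X = x]. If π*(·) and φ*(·,·) are functions such that either π* = π or φ*(·,·) = φ(·,·) (but not necessarily both), then E[ φ*(X,θ) ] + E[ (T/π*(X)) ( L(Y,X,θ) − φ*(X,θ) ) ] = E[ L(Y,X,θ) ]. (Double robustness of the DDR representation of the risk.) -/
/-!
Ignorability makes `T` carry no more information about `(X, Y)` than about `X`:
`E[T | X, Y] = E[T | X] = π(X)`, which follows by comparing integrals over the generating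
π-system of sets `{X ∈ D} ∩ {Y ∈ C}`. Consequently `E[T (L - φ*(X)) | X] = π(X) (φ(X) - φ*(X))`,
so the correction term equals `E[π(X) / π*(X) · (φ(X) - φ*(X))]`. This is
`E[φ(X)] - E[φ*(X)]` when `π* = π` and `0` when `φ* = φ`; either way the sum is
`E[φ(X)] = E[L]`.
-/

open MeasureTheory ProbabilityTheory

section

variable {Ω : Type*} {m m' mΩ : MeasurableSpace Ω} {μ : Measure Ω}

theorem setIntegral_eq_of_forall_inter_of_measurableSet_sup
    (hm : m ≤ mΩ) (hm' : m' ≤ mΩ) {f g : Ω → ℝ} (hf : Integrable f μ) (hg : Integrable g μ)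
    (hfg : ∀ a b, MeasurableSet[m] a → MeasurableSet[m'] b →
      ∫ x in a ∩ b, f x ∂μ = ∫ x in a ∩ b, g x ∂μ)
    {s : Set Ω} (hs : MeasurableSet[m ⊔ m'] s) :
    ∫ x in s, f x ∂μ = ∫ x in s, g x ∂μ := by
  set S := Set.image2 (· ∩ ·) {a | MeasurableSet[m] a} {b | MeasurableSet[m'] b}
  have hgen : m ⊔ m' = MeasurableSpace.generateFrom S := by
    refine le_antisymm (sup_le (fun a ha => ?_) (fun b hb => ?_)) ?_
    · exact MeasurableSpace.measurableSet_generateFrom ⟨a, ha, Set.univ, .univ, Set.inter_univ a⟩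
    · exact MeasurableSpace.measurableSet_generateFrom ⟨Set.univ, .univ, b, hb, Set.univ_inter b⟩
    · refine MeasurableSpace.generateFrom_le ?_
      rintro _ ⟨a, ha, b, hb, rfl⟩
      exact (le_sup_left (a := m) a ha).inter (le_sup_right (b := m') b hb)
  have hpi : IsPiSystem S := by
    rintro _ ⟨a, ha, b, hb, rfl⟩ _ ⟨a', ha', b', hb', rfl⟩ _
    exact ⟨a ∩ a', ha.inter ha', b ∩ b', hb.inter hb', Set.inter_inter_inter_comm a a' b b'⟩
  have hle : m ⊔ m' ≤ mΩ := sup_le hm hm'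
  have huniv : ∫ x, f x ∂μ = ∫ x, g x ∂μ := by
    simpa using hfg Set.univ Set.univ .univ .univ
  induction s, hs using MeasurableSpace.induction_on_inter hgen hpi with
  | empty => simp
  | basic s hs =>
    obtain ⟨a, ha, b, hb, rfl⟩ := hs
    exact hfg a b ha hb
  | compl t ht ih =>
    rw [setIntegral_compl (hle t ht) hf, setIntegral_compl (hle t ht) hg, ih, huniv]
  | iUnion t hdisj ht ih =>
    rw [integral_iUnion (fun i => hle _ (ht i)) hdisj hf.integrableOn,
      integral_iUnion (fun i => hle _ (ht i)) hdisj hg.integrableOn]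
    exact tsum_congr ih

variable [IsFiniteMeasure μ]

/-- `hfac` says that `A` and `m'` are conditionally independent given `m`. -/
theorem condExp_indicator_sup_ae_eq (hm : m ≤ mΩ) (hm' : m' ≤ mΩ)
    {A : Set Ω} (hA : MeasurableSet A)
    (hfac : ∀ C, MeasurableSet[m'] C → μ⟦A ∩ C | m⟧ =ᵐ[μ] μ⟦A | m⟧ * μ⟦C | m⟧) :
    μ⟦A | m ⊔ m'⟧ =ᵐ[μ] μ⟦A | m⟧ := by
  have hind : ∀ {s : Set Ω}, MeasurableSet s → Integrable (s.indicator fun _ => (1 : ℝ)) μ :=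
    fun hs => (integrable_const 1).indicator hs
  refine (ae_eq_condExp_of_forall_setIntegral_eq (sup_le hm hm') (hind hA)
    (fun _ _ _ => integrable_condExp.integrableOn) (fun s hs _ => ?_)
    (stronglyMeasurable_condExp.mono (le_sup_left : m ≤ m ⊔ m')).aestronglyMeasurable).symm
  refine setIntegral_eq_of_forall_inter_of_measurableSet_sup hm hm' integrable_condExp (hind hA)
    (fun a b ha hb => ?_) hs
  have hprod : μ⟦A | m⟧ * (b.indicator fun _ => (1 : ℝ)) = b.indicator (μ⟦A | m⟧) := by
    ext ω; by_cases hω : ω ∈ b <;> simp [hω]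
  have hpull : μ[μ⟦A | m⟧ * (b.indicator fun _ => (1 : ℝ)) | m] =ᵐ[μ] μ⟦A | m⟧ * μ⟦b | m⟧ :=
    condExp_mul_of_stronglyMeasurable_left stronglyMeasurable_condExp
      (hprod ▸ integrable_condExp.indicator (hm' b hb)) (hind (hm' b hb))
  calc ∫ x in a ∩ b, (μ⟦A | m⟧) x ∂μ
      = ∫ x in a, (μ⟦A | m⟧ * b.indicator fun _ => (1 : ℝ)) x ∂μ := by
        rw [hprod, setIntegral_indicator (hm' b hb)]
    _ = ∫ x in a, (μ[μ⟦A | m⟧ * (b.indicator fun _ => (1 : ℝ)) | m]) x ∂μ :=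
        (setIntegral_condExp hm (hprod ▸ integrable_condExp.indicator (hm' b hb)) ha).symm
    _ = ∫ x in a, (μ⟦A ∩ b | m⟧) x ∂μ :=
        setIntegral_congr_ae (hm a ha) <| by
          filter_upwards [hpull, hfac b hb] with ω h₁ h₂ _
          rw [h₁, h₂]
    _ = ∫ x in a ∩ b, A.indicator (fun _ => (1 : ℝ)) x ∂μ := by
        rw [setIntegral_condExp hm (hind (hA.inter (hm' b hb))) ha, Set.inter_comm A b,
          ← Set.indicator_indicator, setIntegral_indicator (hm' b hb)]

theorem condExp_mul_ae_eq_of_condExp_ae_eq (hmm' : m ≤ m') (hm' : m' ≤ mΩ) {T W : Ω → ℝ}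
    {R : ℝ} (hT : AEStronglyMeasurable T μ) (hTbd : ∀ᵐ ω ∂μ, ‖T ω‖ ≤ R)
    (hTm : μ[T | m'] =ᵐ[μ] μ[T | m]) (hW : StronglyMeasurable[m'] W) (hWint : Integrable W μ) :
    μ[T * W | m] =ᵐ[μ] μ[T | m] * μ[W | m] := by
  have hTint : Integrable T μ := .of_bound hT R hTbd
  have hWT : Integrable (W * T) μ := hWint.mul_bdd hT hTbd
  have hcondT_bd : ∀ᵐ ω ∂μ, ‖(μ[T | m]) ω‖ ≤ R := by
    simpa only [Real.norm_eq_abs] using ae_bdd_abs_condExp_of_ae_bdd_abs (m := m) hTbd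
  calc μ[T * W | m] =ᵐ[μ] μ[μ[W * T | m'] | m] := by
        rw [mul_comm]; exact (condExp_condExp_of_le hmm' hm').symm
    _ =ᵐ[μ] μ[μ[T | m] * W | m] := condExp_congr_ae <| by
        filter_upwards [condExp_mul_of_stronglyMeasurable_left hW hWT hTint, hTm] with ω h₁ h₂
        rw [h₁, Pi.mul_apply, h₂, mul_comm]; rfl
    _ =ᵐ[μ] μ[T | m] * μ[W | m] :=
        condExp_stronglyMeasurable_mul_of_bound (hmm'.trans hm') stronglyMeasurable_condExp
          hWint R hcondT_bd

theorem integral_mul_condExp (hm : m ≤ mΩ) {g F : Ω → ℝ}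
    (hg : StronglyMeasurable[m] g) {c : ℝ} (hgbd : ∀ᵐ ω ∂μ, ‖g ω‖ ≤ c) (hF : Integrable F μ) :
    ∫ ω, g ω * (μ[F | m]) ω ∂μ = ∫ ω, g ω * F ω ∂μ :=
  calc ∫ ω, g ω * (μ[F | m]) ω ∂μ = ∫ ω, (μ[g * F | m]) ω ∂μ :=
        integral_congr_ae (condExp_stronglyMeasurable_mul_of_bound hm hg hF c hgbd).symm
    _ = ∫ ω, g ω * F ω ∂μ := integral_condExp hm

theorem condExp_sup_comap_ae_eq_of_condIndepFun [StandardBorelSpace Ω] {β : Type*}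
    [MeasurableSpace β] (hm : m ≤ mΩ) {T : Ω → ℝ} {Y : Ω → β}
    (hT : Measurable T) (hY : Measurable Y) (hT01 : ∀ ω, T ω = 0 ∨ T ω = 1)
    (hindep : CondIndepFun m hm T Y μ) :
    μ[T | m ⊔ MeasurableSpace.comap Y inferInstance] =ᵐ[μ] μ[T | m] := by
  have hT_ind : (T ⁻¹' {1}).indicator (fun _ => (1 : ℝ)) = T := by
    ext ω; rcases hT01 ω with h | h <;> simp [h]
  rw [← hT_ind]
  refine condExp_indicator_sup_ae_eq hm hY.comap_le (hT (measurableSet_singleton 1)) ?_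
  rintro _ ⟨C, hC, rfl⟩
  exact (condIndepFun_iff_condExp_inter_preimage_eq_mul hT hY).mp hindep _ _
    (measurableSet_singleton 1) hC

theorem integral_div_mul_sub_eq_integral_inv_mul_condExp (hmm' : m ≤ m') (hm' : m' ≤ mΩ)
    {T W h p : Ω → ℝ} (hT : Measurable T) {R : ℝ} (hTbd : ∀ ω, ‖T ω‖ ≤ R)
    (hTm : μ[T | m'] =ᵐ[μ] μ[T | m])
    (hW : StronglyMeasurable[m'] W) (hWint : Integrable W μ)
    (hh : StronglyMeasurable[m] h) (hhint : Integrable h μ)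
    (hp : StronglyMeasurable[m] p) {δ : ℝ} (hδ : 0 < δ) (hpδ : ∀ ω, δ ≤ p ω) :
    ∫ ω, T ω / p ω * (W ω - h ω) ∂μ
      = ∫ ω, (p ω)⁻¹ * ((μ[T | m]) ω * ((μ[W | m]) ω - h ω)) ∂μ := by
  have hm : m ≤ mΩ := hmm'.trans hm'
  have hfac : μ[T * (W - h) | m] =ᵐ[μ] μ[T | m] * (μ[W | m] - h) := by
    refine (condExp_mul_ae_eq_of_condExp_ae_eq hmm' hm' hT.aestronglyMeasurable
      (.of_forall hTbd) hTm (hW.sub (hh.mono hmm')) (hWint.sub hhint)).trans ?_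
    filter_upwards [condExp_sub hWint hhint m] with ω hω
    rw [Pi.mul_apply, hω, Pi.sub_apply, condExp_of_stronglyMeasurable hm hh hhint]
    rfl
  have hpinv_bd : ∀ᵐ ω ∂μ, ‖(p ω)⁻¹‖ ≤ δ⁻¹ := .of_forall fun ω => by
    rw [norm_inv, Real.norm_of_nonneg (hδ.le.trans (hpδ ω))]
    exact inv_anti₀ hδ (hpδ ω)
  calc ∫ ω, T ω / p ω * (W ω - h ω) ∂μ = ∫ ω, (p ω)⁻¹ * (T * (W - h)) ω ∂μ := by
        simp only [Pi.mul_apply, Pi.sub_apply, div_eq_inv_mul, mul_assoc]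
    _ = ∫ ω, (p ω)⁻¹ * (μ[T * (W - h) | m]) ω ∂μ :=
        (integral_mul_condExp hm hp.measurable.inv.stronglyMeasurable hpinv_bd
          ((hWint.sub hhint).bdd_mul hT.aestronglyMeasurable (.of_forall hTbd))).symm
    _ = _ := integral_congr_ae <| by
        filter_upwards [hfac] with ω hω
        rw [hω]; rfl

theorem integral_add_integral_inv_mul_condExp_sub_eq (hm : m ≤ mΩ)
    {W h p q : Ω → ℝ} (hh : Integrable h μ) (hp : ∀ ω, p ω ≠ 0)
    (hDR : p =ᵐ[μ] q ∨ h =ᵐ[μ] μ[W | m]) :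
    ∫ ω, h ω ∂μ + ∫ ω, (p ω)⁻¹ * (q ω * ((μ[W | m]) ω - h ω)) ∂μ = ∫ ω, W ω ∂μ := by
  rcases hDR with hpq | hh_eq
  · have hcancel : ∫ ω, (p ω)⁻¹ * (q ω * ((μ[W | m]) ω - h ω)) ∂μ
        = ∫ ω, ((μ[W | m]) ω - h ω) ∂μ :=
      integral_congr_ae <| by
        filter_upwards [hpq] with ω hω
        rw [← hω]; exact inv_mul_cancel_left₀ (hp ω) _
    rw [hcancel, integral_sub integrable_condExp hh, integral_condExp hm]
    ring
  · have hzero : ∫ ω, (p ω)⁻¹ * (q ω * ((μ[W | m]) ω - h ω)) ∂μ = 0 :=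
      (integral_congr_ae <| by
        filter_upwards [hh_eq] with ω hω
        rw [← hω, sub_self, mul_zero, mul_zero]).trans (integral_zero Ω ℝ)
    rw [hzero, add_zero]
    exact (integral_congr_ae hh_eq).trans (integral_condExp hm)

end

theorem ddr_double_robustness_general
    {Ω : Type*} [mΩ : MeasurableSpace Ω] [StandardBorelSpace Ω]
    {𝒳 : Type*} [MeasurableSpace 𝒳] {d : ℕ}
    (μ : Measure Ω) [IsProbabilityMeasure μ]
    (X : Ω → 𝒳) (Y : Ω → ℝ) (T : Ω → ℝ)
    (hX : Measurable X) (hY : Measurable Y) (hT : Measurable T)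
    (hT01 : ∀ ω, T ω = 0 ∨ T ω = 1)
    (hindep : CondIndepFun (MeasurableSpace.comap X inferInstance) hX.comap_le T Y μ)
    (L : ℝ → 𝒳 → (Fin d → ℝ) → ℝ) (θ : Fin d → ℝ)
    (hLmeas : Measurable fun p : ℝ × 𝒳 => L p.1 p.2 θ)
    (hLint : Integrable (fun ω => L (Y ω) (X ω) θ) μ)
    -- the working propensity score `π*`, bounded below by a positive constant
    (pfs : 𝒳 → ℝ) (hpfsmeas : Measurable pfs)
    (δs : ℝ) (hδs : 0 < δs) (hpfslow : ∀ x, δs ≤ pfs x)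
    -- the working outcome regression `φ*(·, θ)`
    (φs : 𝒳 → ℝ) (hφsmeas : Measurable φs)
    (hφsint : Integrable (fun ω => φs (X ω)) μ)
    -- either `π*` is the true propensity score or `φ*` is the true outcome regression
    (hDR : ((fun ω => pfs (X ω)) =ᵐ[μ] μ[T | MeasurableSpace.comap X inferInstance]) ∨
        ((fun ω => φs (X ω)) =ᵐ[μ]
          μ[(fun ω => L (Y ω) (X ω) θ) | MeasurableSpace.comap X inferInstance])) :
    (∫ ω, φs (X ω) ∂μ) +
      ∫ ω, (T ω / pfs (X ω)) * (L (Y ω) (X ω) θ - φs (X ω)) ∂μ =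
      ∫ ω, L (Y ω) (X ω) θ ∂μ := by
  have hW : StronglyMeasurable[MeasurableSpace.comap X inferInstance ⊔
      MeasurableSpace.comap Y inferInstance] fun ω => L (Y ω) (X ω) θ := by
    rw [sup_comm, ← MeasurableSpace.comap_prodMk]
    exact (hLmeas.comp (comap_measurable _)).stronglyMeasurable
  have hTbd : ∀ ω, ‖T ω‖ ≤ 1 := fun ω => by rcases hT01 ω with h | h <;> simp [h]
  rw [integral_div_mul_sub_eq_integral_inv_mul_condExp (h := fun ω => φs (X ω))
    (p := fun ω => pfs (X ω)) le_sup_left (sup_le hX.comap_le hY.comap_le) hT hTbd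
    (condExp_sup_comap_ae_eq_of_condIndepFun hX.comap_le hT hY hT01 hindep) hW hLint
    (hφsmeas.comp (comap_measurable X)).stronglyMeasurable hφsint
    (hpfsmeas.comp (comap_measurable X)).stronglyMeasurable hδs (fun ω => hpfslow (X ω))]
  exact integral_add_integral_inv_mul_condExp_sub_eq hX.comap_le hφsint
    (fun ω => (hδs.trans_le (hpfslow (X ω))).ne') hDR

/-- **Double robustness of the DDR representation of the risk.**  With ignorability and
positivity, if either `π* = π` (the true propensity score) or `φ*(·,θ) = φ(·,θ)` (the true
outcome regression of the loss), then
`E[φ*(X,θ)] + E[(T/π*(X)) (L(Y,X,θ) − φ*(X,θ))] = E[L(Y,X,θ)]`. -/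
theorem ddr_double_robustness
    {Ω : Type*} [mΩ : MeasurableSpace Ω] [StandardBorelSpace Ω] [Nonempty Ω]
    {𝒳 : Type*} [MeasurableSpace 𝒳] {d : ℕ}
    (μ : Measure Ω) [IsProbabilityMeasure μ]
    (X : Ω → 𝒳) (Y : Ω → ℝ) (T : Ω → ℝ)
    (hX : Measurable X) (hY : Measurable Y) (hT : Measurable T)
    (hT01 : ∀ ω, T ω = 0 ∨ T ω = 1)
    (hindep : CondIndepFun (MeasurableSpace.comap X inferInstance) hX.comap_le T Y μ)
    (L : ℝ → 𝒳 → (Fin d → ℝ) → ℝ) (θ : Fin d → ℝ)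
    (hLmeas : Measurable fun p : ℝ × 𝒳 => L p.1 p.2 θ)
    (hLint : Integrable (fun ω => L (Y ω) (X ω) θ) μ)
    -- the working propensity score `π*`, bounded below by a positive constant
    (pfs : 𝒳 → ℝ) (hpfsmeas : Measurable pfs)
    (δs : ℝ) (hδs : 0 < δs) (hpfslow : ∀ x, δs ≤ pfs x)
    -- the working outcome regression `φ*(·, θ)`
    (φs : 𝒳 → ℝ) (hφsmeas : Measurable φs)
    (hφsint : Integrable (fun ω => φs (X ω)) μ)
    -- either `π*` is the true propensity score or `φ*` is the true outcome regression
    (hDR : ((fun ω => pfs (X ω)) =ᵐ[μ] μ[T | MeasurableSpace.comap X inferInstance]) ∨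
        ((fun ω => φs (X ω)) =ᵐ[μ]
          μ[(fun ω => L (Y ω) (X ω) θ) | MeasurableSpace.comap X inferInstance])) :
    (∫ ω, φs (X ω) ∂μ) +
      ∫ ω, (T ω / pfs (X ω)) * (L (Y ω) (X ω) θ - φs (X ω)) ∂μ =
      ∫ ω, L (Y ω) (X ω) θ ∂μ :=
  ddr_double_robustness_general (mΩ := mΩ) μ X Y T hX hY hT hT01 hindep L θ hLmeas hLint pfs
    hpfsmeas δs hδs hpfslow φs hφsmeas hφsint hDR
end

section
/- Suppose the loss L(y,x,θ) is convex and differentiable in θ with gradient ∇L(y,x,θ) = h(x)(y − g(x,θ)). Define pseudo-outcomes Ỹ_i := m̃(X_i) + (T_i/π̂(X_i))(Y_i − m̃(X_i)) and the pseudo-loss L̃_n(θ) := (1/n) Σ_i L(Ỹ_i, X_i, θ). Then the gradient of L̃_n equals the gradient of the empirical DDR loss L_n^DDR(θ) := (1/n) Σ_i φ̂(X_i,θ) + (1/n) Σ_i (T_i/π̂(X_i)) ( L(Y_i,X_i,θ) − φ̂(X_i,θ) ), where φ̂(x,θ) has gradient h(x)(m̃(x) − g(x,θ)). Consequently, the L1-penalized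 minimizers of L_n^DDR and L̃_n coincide. -/
noncomputable section

/-- The empirical DDR loss
`L_n^DDR(θ) = (1/n) Σ_i φ̂(X_i,θ) + (1/n) Σ_i (T_i/π̂(X_i)) (L(Y_i,X_i,θ) − φ̂(X_i,θ))`. -/
def empDDRLoss {d n : ℕ} {𝒳 : Type*} (L : ℝ → 𝒳 → EuclideanSpace ℝ (Fin d) → ℝ)
    (φh : 𝒳 → EuclideanSpace ℝ (Fin d) → ℝ) (πh : 𝒳 → ℝ)
    (Xv : Fin n → 𝒳) (T Y : Fin n → ℝ) (θ : EuclideanSpace ℝ (Fin d)) : ℝ :=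
  (n : ℝ)⁻¹ * ∑ i, φh (Xv i) θ +
    (n : ℝ)⁻¹ * ∑ i, (T i / πh (Xv i)) * (L (Y i) (Xv i) θ - φh (Xv i) θ)

/-- The pseudo-outcome loss `L̃_n(θ) = (1/n) Σ_i L(Ỹ_i, X_i, θ)` with pseudo-outcomes
`Ỹ_i = m̃(X_i) + (T_i/π̂(X_i)) (Y_i − m̃(X_i))`. -/
def pseudoLoss {d n : ℕ} {𝒳 : Type*} (L : ℝ → 𝒳 → EuclideanSpace ℝ (Fin d) → ℝ)
    (mt : 𝒳 → ℝ) (πh : 𝒳 → ℝ)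
    (Xv : Fin n → 𝒳) (T Y : Fin n → ℝ) (θ : EuclideanSpace ℝ (Fin d)) : ℝ :=
  (n : ℝ)⁻¹ * ∑ i, L (mt (Xv i) + (T i / πh (Xv i)) * (Y i - mt (Xv i))) (Xv i) θ

/-!
The gradient `h(x) (y − g(x,θ))` of `L` is affine in the outcome `y`, so the gradient of the DDR
loss, `(1/n) Σ_i [(m̃ − g) + (T_i/π̂) ((Y_i − g) − (m̃ − g))] h`, collapses to
`(1/n) Σ_i (Ỹ_i − g) h`, the gradient of the pseudo-loss. Two functions on `ℝ^d` with the same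
gradient everywhere differ by a constant, and a constant shift of the loss does not move the
minimizers of the penalized objective.
-/

section GradientCalculus

variable {F : Type*} [NormedAddCommGroup F] [InnerProductSpace ℝ F] [CompleteSpace F]
  {f g : F → ℝ} {f' g' x : F}

theorem HasGradientAt.add (hf : HasGradientAt f f' x) (hg : HasGradientAt g g' x) :
    HasGradientAt (fun y => f y + g y) (f' + g') x := by
  rw [hasGradientAt_iff_hasFDerivAt] at *
  simpa only [map_add] using hf.fun_add hg

theorem HasGradientAt.sub (hf : HasGradientAt f f' x) (hg : HasGradientAt g g' x) :
    HasGradientAt (fun y => f y - g y) (f' - g') x := by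
  rw [hasGradientAt_iff_hasFDerivAt] at *
  simpa only [map_sub] using hf.fun_sub hg

theorem HasGradientAt.const_mul (c : ℝ) (hf : HasGradientAt f f' x) :
    HasGradientAt (fun y => c * f y) (c • f') x := by
  rw [hasGradientAt_iff_hasFDerivAt] at *
  simpa only [map_smul] using hf.const_mul c

theorem HasGradientAt.fun_sum {ι : Type*} {s : Finset ι} {f : ι → F → ℝ} {f' : ι → F}
    (h : ∀ i ∈ s, HasGradientAt (f i) (f' i) x) :
    HasGradientAt (fun y => ∑ i ∈ s, f i y) (∑ i ∈ s, f' i) x := by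
  simp only [hasGradientAt_iff_hasFDerivAt, map_sum] at *
  exact HasFDerivAt.fun_sum h

theorem hasGradientAt_iff_of_hasGradientAt (hf : HasGradientAt f f' x)
    (hg : HasGradientAt g f' x) {v : F} : HasGradientAt f v x ↔ HasGradientAt g v x :=
  ⟨fun h => h.unique hf ▸ hg, fun h => h.unique hg ▸ hf⟩

theorem exists_eq_add_of_hasGradientAt {G : F → F} (hf : ∀ x, HasGradientAt f (G x) x)
    (hg : ∀ x, HasGradientAt g (G x) x) : ∃ a, ∀ x, f x = g x + a := by
  obtain ⟨a, ha⟩ := isOpen_univ.exists_eq_add_of_fderiv_eq (𝕜 := ℝ) isPreconnected_univ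
    (fun x _ => (hf x).differentiableAt.differentiableWithinAt)
    (fun x _ => (hg x).differentiableAt.differentiableWithinAt)
    (fun x _ => by simp only [(hf x).hasFDerivAt.fderiv, (hg x).hasFDerivAt.fderiv])
  exact ⟨a, fun x => ha (Set.mem_univ x)⟩

end GradientCalculus

theorem forall_add_le_add_iff_of_eq_add_const {α β : Type*} [AddCommGroup β] [PartialOrder β]
    [IsOrderedAddMonoid β] {f g : α → β} {a : β} (hfg : ∀ x, f x = g x + a) (p : α → β) (x : α) :
    (∀ y, f x + p x ≤ f y + p y) ↔ ∀ y, g x + p x ≤ g y + p y := by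
  simp only [hfg, add_right_comm _ a, add_le_add_iff_right]

section DDR

variable {d n : ℕ} {𝒳 : Type*} {L : ℝ → 𝒳 → EuclideanSpace ℝ (Fin d) → ℝ}
  {h : 𝒳 → EuclideanSpace ℝ (Fin d)} {g : 𝒳 → EuclideanSpace ℝ (Fin d) → ℝ}
  {πh mt : 𝒳 → ℝ} {φh : 𝒳 → EuclideanSpace ℝ (Fin d) → ℝ}
  {Xv : Fin n → 𝒳} {T Y : Fin n → ℝ}

def pseudoOutcome (mt πh : 𝒳 → ℝ) (x : 𝒳) (t y : ℝ) : ℝ :=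
  mt x + (t / πh x) * (y - mt x)

def pseudoGradient (h : 𝒳 → EuclideanSpace ℝ (Fin d)) (g : 𝒳 → EuclideanSpace ℝ (Fin d) → ℝ)
    (mt πh : 𝒳 → ℝ) (Xv : Fin n → 𝒳) (T Y : Fin n → ℝ) (θ : EuclideanSpace ℝ (Fin d)) :
    EuclideanSpace ℝ (Fin d) :=
  (n : ℝ)⁻¹ • ∑ i, (pseudoOutcome mt πh (Xv i) (T i) (Y i) - g (Xv i) θ) • h (Xv i)

theorem hasGradientAt_pseudoLoss
    (hLgrad : ∀ y x θ, HasGradientAt (L y x) ((y - g x θ) • h x) θ) (θ : EuclideanSpace ℝ (Fin d)) :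
    HasGradientAt (pseudoLoss L mt πh Xv T Y) (pseudoGradient h g mt πh Xv T Y θ) θ :=
  (HasGradientAt.fun_sum (s := .univ) fun i _ => hLgrad _ (Xv i) θ).const_mul _

theorem hasGradientAt_empDDRLoss
    (hLgrad : ∀ y x θ, HasGradientAt (L y x) ((y - g x θ) • h x) θ)
    (hφgrad : ∀ x θ, HasGradientAt (φh x) ((mt x - g x θ) • h x) θ) (θ : EuclideanSpace ℝ (Fin d)) :
    HasGradientAt (empDDRLoss L φh πh Xv T Y) (pseudoGradient h g mt πh Xv T Y θ) θ := by
  have hmean := (HasGradientAt.fun_sum (s := .univ) fun i _ => hφgrad (Xv i) θ).const_mul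
    (n : ℝ)⁻¹
  have hcorrection := (HasGradientAt.fun_sum (s := .univ) fun i _ =>
    ((hLgrad (Y i) (Xv i) θ).sub (hφgrad (Xv i) θ)).const_mul (T i / πh (Xv i))).const_mul
      (n : ℝ)⁻¹
  unfold empDDRLoss
  convert hmean.add hcorrection using 1
  simp only [pseudoGradient, pseudoOutcome, ← smul_add, ← Finset.sum_add_distrib]
  congr 1
  refine Finset.sum_congr rfl fun i _ => ?_
  match_scalars
  ring

end DDR

theorem ddr_pseudo_outcome_equivalence_general {d n : ℕ} {𝒳 : Type*}
    (L : ℝ → 𝒳 → EuclideanSpace ℝ (Fin d) → ℝ)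
    (h : 𝒳 → EuclideanSpace ℝ (Fin d)) (g : 𝒳 → EuclideanSpace ℝ (Fin d) → ℝ)
    (hLgrad : ∀ (y : ℝ) (x : 𝒳) (θ : EuclideanSpace ℝ (Fin d)),
      HasGradientAt (L y x) ((y - g x θ) • h x) θ)
    (πh : 𝒳 → ℝ)
    (mt : 𝒳 → ℝ)
    (φh : 𝒳 → EuclideanSpace ℝ (Fin d) → ℝ)
    (hφgrad : ∀ (x : 𝒳) (θ : EuclideanSpace ℝ (Fin d)),
      HasGradientAt (φh x) ((mt x - g x θ) • h x) θ)
    (Xv : Fin n → 𝒳) (T Y : Fin n → ℝ) :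
    (∀ θ v : EuclideanSpace ℝ (Fin d),
      HasGradientAt (empDDRLoss L φh πh Xv T Y) v θ ↔
        HasGradientAt (pseudoLoss L mt πh Xv T Y) v θ) ∧
    (∀ lam : ℝ, 0 ≤ lam → ∀ θstar : EuclideanSpace ℝ (Fin d),
      ((∀ θ, empDDRLoss L φh πh Xv T Y θstar + lam * ∑ i, |θstar i| ≤
          empDDRLoss L φh πh Xv T Y θ + lam * ∑ i, |θ i|) ↔
        (∀ θ, pseudoLoss L mt πh Xv T Y θstar + lam * ∑ i, |θstar i| ≤
          pseudoLoss L mt πh Xv T Y θ + lam * ∑ i, |θ i|))) := by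
  set G := pseudoGradient h g mt πh Xv T Y
  have hE : ∀ θ, HasGradientAt (empDDRLoss L φh πh Xv T Y) (G θ) θ :=
    hasGradientAt_empDDRLoss hLgrad hφgrad
  have hP : ∀ θ, HasGradientAt (pseudoLoss L mt πh Xv T Y) (G θ) θ :=
    hasGradientAt_pseudoLoss hLgrad
  obtain ⟨a, ha⟩ := exists_eq_add_of_hasGradientAt hE hP
  refine ⟨fun θ v => hasGradientAt_iff_of_hasGradientAt (hE θ) (hP θ), fun lam _ θstar => ?_⟩
  exact forall_add_le_add_iff_of_eq_add_const ha (fun θ => lam * ∑ i, |θ i|) θstar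

/-- **Pseudo-outcome representation of the DDR loss.**  If the loss `L(y,x,θ)` is convex and
differentiable in `θ` with gradient `h(x) (y − g(x,θ))`, and `φ̂(x,·)` has gradient
`h(x) (m̃(x) − g(x,θ))`, then the pseudo-loss `L̃_n` and the empirical DDR loss `L_n^DDR`
have the same gradient at every `θ`, and consequently their `L1`-penalized minimizers
coincide. -/
theorem ddr_pseudo_outcome_equivalence {d n : ℕ} {𝒳 : Type*}
    (L : ℝ → 𝒳 → EuclideanSpace ℝ (Fin d) → ℝ)
    (h : 𝒳 → EuclideanSpace ℝ (Fin d)) (g : 𝒳 → EuclideanSpace ℝ (Fin d) → ℝ)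
    (hconv : ∀ (y : ℝ) (x : 𝒳), ConvexOn ℝ Set.univ (L y x))
    (hLgrad : ∀ (y : ℝ) (x : 𝒳) (θ : EuclideanSpace ℝ (Fin d)),
      HasGradientAt (L y x) ((y - g x θ) • h x) θ)
    (πh : 𝒳 → ℝ) (hπpos : ∀ x, 0 < πh x) (hπle : ∀ x, πh x ≤ 1)
    (mt : 𝒳 → ℝ)
    (φh : 𝒳 → EuclideanSpace ℝ (Fin d) → ℝ)
    (hφgrad : ∀ (x : 𝒳) (θ : EuclideanSpace ℝ (Fin d)),
      HasGradientAt (φh x) ((mt x - g x θ) • h x) θ)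
    (Xv : Fin n → 𝒳) (T Y : Fin n → ℝ) :
    (∀ θ v : EuclideanSpace ℝ (Fin d),
      HasGradientAt (empDDRLoss L φh πh Xv T Y) v θ ↔
        HasGradientAt (pseudoLoss L mt πh Xv T Y) v θ) ∧
    (∀ lam : ℝ, 0 ≤ lam → ∀ θstar : EuclideanSpace ℝ (Fin d),
      ((∀ θ, empDDRLoss L φh πh Xv T Y θstar + lam * ∑ i, |θstar i| ≤
          empDDRLoss L φh πh Xv T Y θ + lam * ∑ i, |θ i|) ↔
        (∀ θ, pseudoLoss L mt πh Xv T Y θstar + lam * ∑ i, |θstar i| ≤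
          pseudoLoss L mt πh Xv T Y θ + lam * ∑ i, |θ i|))) :=
  ddr_pseudo_outcome_equivalence_general L h g hLgrad πh mt φh hφgrad Xv T Y
end
end

section
/- Let Z ∈ {0,1} be a binary random variable with p := P(Z = 1), and let Z̃ := Z − p. Then Z̃ is sub-Gaussian with ψ₂-Orlicz norm ‖Z̃‖_{ψ₂} ≤ 2 p̃, where p̃ = 0 if p ∈ {0,1}, p̃ = 1/2 if p = 1/2, and p̃ = [ (p − 1/2) / log( p/(1−p) ) ]^{1/2} otherwise. -/
/-!
With `q = 1 - p`, the centred variable equals `q` with probability `p` and `-p` with probability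
`q`, so `E exp (Z̃² / c²) = p exp (q² t) + q exp (p² t)` with `t = 1 / c²`. The paper's scale is
exactly `t = log (p / q) / (2 (p - q))`, which makes `exp (p² t) = exp (q² t) √(p / q)` and the
moment equal to `exp (q² t) (p + √(p q))`. For `q < p`, `log (p / q) ≤ p / q - 1` gives
`q² t ≤ q / 2 ≤ 1 / 4`, and `exp (1 / 4) ≤ 1 / (1 - 1 / 4)` together with `√(p q) ≤ 1 / 2`
bounds the moment by `4 / 3 · 3 / 2 = 2`.
-/

open MeasureTheory

/-- The `ψ₂`-Orlicz (sub-Gaussian) norm: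
`‖X‖_{ψ₂} = inf { c > 0 : E[exp(X²/c²)] ≤ 2 }`. -/
noncomputable def psi2Norm {Ω : Type*} [MeasurableSpace Ω] (μ : Measure Ω)
    (X : Ω → ℝ) : ℝ :=
  sInf {c : ℝ | 0 < c ∧ ∫⁻ ω, ENNReal.ofReal (Real.exp ((X ω) ^ 2 / c ^ 2)) ∂μ ≤ 2}

open Real
open scoped ENNReal

namespace Real

lemma exp_one_fourth_le : exp (1 / 4) ≤ 4 / 3 :=
  (exp_bound_div_one_sub_of_interval (by norm_num) (by norm_num)).trans_eq (by norm_num)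

lemma exp_log_div_two {x : ℝ} (hx : 0 < x) : exp (log x / 2) = √x := by
  rw [sqrt_eq_rpow, rpow_def_of_pos hx, div_eq_mul_one_div]

lemma sub_half_div_log_div_one_sub_pos {p : ℝ} (hp0 : 0 < p) (hp1 : p < 1) (hp : p ≠ 1 / 2) :
    0 < (p - 1 / 2) / log (p / (1 - p)) := by
  have hq : 0 < 1 - p := by linarith
  rcases hp.lt_or_gt with h | h
  · exact div_pos_of_neg_of_neg (by linarith)
      (log_neg (by positivity) ((div_lt_one hq).2 (by linarith)))
  · exact div_pos (by linarith) (log_pos ((one_lt_div hq).2 (by linarith)))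

lemma log_div_div_two_mul_sub_comm (p q : ℝ) :
    log (q / p) / (2 * (q - p)) = log (p / q) / (2 * (p - q)) := by
  rw [← inv_div p q, log_inv, show 2 * (q - p) = -(2 * (p - q)) by ring, neg_div_neg_eq]

lemma mul_exp_add_mul_exp_le_two {p q : ℝ} (hp : 0 < p) (hq : 0 < q) (hpq : p + q = 1)
    (hne : p ≠ q) :
    p * exp (q ^ 2 * (log (p / q) / (2 * (p - q)))) +
      q * exp (p ^ 2 * (log (p / q) / (2 * (p - q)))) ≤ 2 := by
  wlog hqp : q < p generalizing p q
  · rw [← log_div_div_two_mul_sub_comm, add_comm]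
    exact this hq hp (by linarith) hne.symm (lt_of_le_of_ne (not_lt.1 hqp) hne)
  set t := log (p / q) / (2 * (p - q)) with ht
  have hsub : 0 < p - q := by linarith
  have hshift : p ^ 2 * t = q ^ 2 * t + log (p / q) / 2 := by
    have : p ^ 2 - q ^ 2 = p - q := by rw [sq_sub_sq, hpq, one_mul]
    rw [ht]; field_simp; linear_combination (log (p / q)) * this
  have hlog : log (p / q) ≤ (p - q) / q := by
    have := log_le_sub_one_of_pos (div_pos hp hq)
    rwa [div_sub_one hq.ne'] at this
  have hsmall : q ^ 2 * t ≤ 1 / 4 := by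
    have : t ≤ 1 / (2 * q) := by
      calc t ≤ (p - q) / q / (2 * (p - q)) := div_le_div_of_nonneg_right hlog (by positivity)
        _ = 1 / (2 * q) := by field_simp
    calc q ^ 2 * t ≤ q ^ 2 * (1 / (2 * q)) := by gcongr
      _ = q / 2 := by field_simp
      _ ≤ 1 / 4 := by linarith
  have hgm : q * √(p / q) ≤ 1 / 2 := by
    calc q * √(p / q) = √(q ^ 2 * (p / q)) := by rw [sqrt_mul (sq_nonneg q), sqrt_sq hq.le]
      _ = √(p * q) := by congr 1; field_simp
      _ ≤ 1 / 2 := (sqrt_le_left (by norm_num)).2 (by nlinarith [sq_nonneg (p - q)])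
  calc p * exp (q ^ 2 * t) + q * exp (p ^ 2 * t)
      = exp (q ^ 2 * t) * (p + q * √(p / q)) := by
        rw [hshift, exp_add, exp_log_div_two (div_pos hp hq)]; ring
    _ ≤ 4 / 3 * (1 + 1 / 2) := by
        gcongr
        · exact (exp_le_exp.2 hsmall).trans exp_one_fourth_le
        · linarith
    _ = 2 := by norm_num

end Real

section

variable {Ω : Type*} [MeasurableSpace Ω] (μ : Measure Ω)

lemma psi2Norm_le_of_lintegral_le {X : Ω → ℝ} {c : ℝ} (hc : 0 < c)
    (h : ∫⁻ ω, ENNReal.ofReal (exp ((X ω) ^ 2 / c ^ 2)) ∂μ ≤ 2) : psi2Norm μ X ≤ c :=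
  csInf_le ⟨0, fun _ hx => hx.1.le⟩ ⟨hc, h⟩

lemma lintegral_comp_of_zero_or_one {Z : Ω → ℝ} (hZ : Measurable Z)
    (hZ01 : ∀ ω, Z ω = 0 ∨ Z ω = 1) (f : ℝ → ℝ≥0∞) :
    ∫⁻ ω, f (Z ω) ∂μ = f 1 * μ {ω | Z ω = 1} + f 0 * μ {ω | Z ω = 1}ᶜ := by
  have hA : MeasurableSet {ω | Z ω = 1} := measurableSet_eq_fun hZ measurable_const
  rw [← lintegral_add_compl _ hA, ← setLIntegral_const, ← setLIntegral_const]
  congr 1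
  · exact setLIntegral_congr_fun hA fun ω hω => by rw [show Z ω = 1 from hω]
  · exact setLIntegral_congr_fun hA.compl fun ω hω => by rw [(hZ01 ω).resolve_right hω]

lemma psi2Norm_sub_le_of_zero_or_one [IsProbabilityMeasure μ] {Z : Ω → ℝ} (hZ : Measurable Z)
    (hZ01 : ∀ ω, Z ω = 0 ∨ Z ω = 1) {c : ℝ} (hc : 0 < c)
    (h : (μ {ω | Z ω = 1}).toReal * exp ((1 - (μ {ω | Z ω = 1}).toReal) ^ 2 / c ^ 2) +
      (1 - (μ {ω | Z ω = 1}).toReal) * exp ((μ {ω | Z ω = 1}).toReal ^ 2 / c ^ 2) ≤ 2) :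
    psi2Norm μ (fun ω => Z ω - (μ {ω | Z ω = 1}).toReal) ≤ c := by
  set A := {ω | Z ω = 1}
  set p := (μ A).toReal
  have hA : MeasurableSet A := measurableSet_eq_fun hZ measurable_const
  have hμA : μ A = ENNReal.ofReal p := (ENNReal.ofReal_toReal (measure_ne_top μ A)).symm
  have hμAc : μ Aᶜ = ENNReal.ofReal (1 - p) := by
    rw [prob_compl_eq_one_sub hA, hμA, ENNReal.ofReal_sub 1 ENNReal.toReal_nonneg,
      ENNReal.ofReal_one]
  have hp1 : p ≤ 1 := measureReal_le_one
  refine psi2Norm_le_of_lintegral_le μ hc ?_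
  rw [lintegral_comp_of_zero_or_one μ hZ hZ01 (fun z => ENNReal.ofReal (exp ((z - p) ^ 2 / c ^ 2))),
    hμA, hμAc, ← ENNReal.ofReal_mul (exp_nonneg _), ← ENNReal.ofReal_mul (exp_nonneg _),
    ← ENNReal.ofReal_add (by positivity) (mul_nonneg (exp_nonneg _) (by linarith)),
    ← ENNReal.ofReal_ofNat 2]
  refine ENNReal.ofReal_le_ofReal ?_
  convert h using 2 <;> ring_nf

end

open Classical in
/-- **Sub-Gaussian property of centered binary random variables.**  If `Z ∈ {0,1}` with
`p = P(Z = 1)` and `Z̃ = Z − p`, then `‖Z̃‖_{ψ₂} ≤ 2 p̃`, where `p̃ = 0` if `p ∈ {0,1}`,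
`p̃ = 1/2` if `p = 1/2`, and `p̃ = ((p − 1/2)/log(p/(1−p)))^{1/2}` otherwise. -/
theorem binary_subGaussian {Ω : Type*} [MeasurableSpace Ω] (μ : Measure Ω)
    [IsProbabilityMeasure μ] (Z : Ω → ℝ) (hZ : Measurable Z)
    (hZ01 : ∀ ω, Z ω = 0 ∨ Z ω = 1) :
    psi2Norm μ (fun ω => Z ω - (μ {ω | Z ω = 1}).toReal) ≤
      2 * (if (μ {ω | Z ω = 1}).toReal = 0 ∨ (μ {ω | Z ω = 1}).toReal = 1 then 0
        else if (μ {ω | Z ω = 1}).toReal = 1 / 2 then 1 / 2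
        else Real.sqrt (((μ {ω | Z ω = 1}).toReal - 1 / 2) /
          Real.log ((μ {ω | Z ω = 1}).toReal / (1 - (μ {ω | Z ω = 1}).toReal)))) := by
  have psi2Norm_le := fun c hc => psi2Norm_sub_le_of_zero_or_one μ hZ hZ01 (c := c) hc
  set p := (μ {ω | Z ω = 1}).toReal
  split_ifs with h01 hhalf
  · refine le_of_forall_pos_le_add fun ε hε => ?_
    rw [mul_zero, zero_add]
    refine psi2Norm_le ε hε ?_
    rcases h01 with h | h <;> norm_num [h]
  · refine (psi2Norm_le 1 one_pos ?_).trans_eq (by norm_num)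
    norm_num [hhalf]
    linarith [exp_one_fourth_le]
  · push Not at h01
    have hp0 : 0 < p := lt_of_le_of_ne ENNReal.toReal_nonneg h01.1.symm
    have hp1 : p < 1 := lt_of_le_of_ne measureReal_le_one h01.2
    have hpos := sub_half_div_log_div_one_sub_pos hp0 hp1 hhalf
    have ht : 1 / (2 * √((p - 1 / 2) / log (p / (1 - p)))) ^ 2 =
        log (p / (1 - p)) / (2 * (p - (1 - p))) := by
      rw [mul_pow, sq_sqrt hpos.le, show 2 * (p - (1 - p)) = 2 ^ 2 * (p - 1 / 2) by ring]
      field_simp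
    refine psi2Norm_le _ (by positivity) ?_
    rw [div_eq_mul_one_div _ (_ ^ 2), div_eq_mul_one_div (p ^ 2), ht]
    exact mul_exp_add_mul_exp_le_two hp0 (by linarith) (by ring) (by contrapose! hhalf; linarith)
end
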